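/- Let B be an n×n complex matrix and suppose that for all integers k, l with 1 ≤ k ≤ n and 2l < k, the sum over all words w : Fin k → Bool with exactly l entries equal to true of Tr(w(B,Bᴴ)) equals 0. Then the pencil L_B(t) is isospectral, i.e. the characteristic polynomial of L_B(t) is independent of t ∈ ℝ. -/

import Mathlib

open Matrix

/-- The Hermitian part `Re B = (B + Bᴴ)/2`. -/
noncomputable def reM {n : ℕ} (B : Matrix (Fin n) (Fin n) ℂ) : Matrix (Fin n) (Fin n) ℂ :=
  (1 / 2 : ℂ) • (B + Bᴴ)

/-- The skew part `Im B = (B - Bᴴ)/(2i)`. -/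
noncomputable def imM {n : ℕ} (B : Matrix (Fin n) (Fin n) ℂ) : Matrix (Fin n) (Fin n) ℂ :=
  (1 / (2 * Complex.I) : ℂ) • (B - Bᴴ)

/-- The pencil `L_B(t) = cos t ⬝ Re B + sin t ⬝ Im B = Re(e^{-it} B)`. -/
noncomputable def LB {n : ℕ} (B : Matrix (Fin n) (Fin n) ℂ) (t : ℝ) :
    Matrix (Fin n) (Fin n) ℂ :=
  (Real.cos t : ℂ) • reM B + (Real.sin t : ℂ) • imM B

/-- The pencil `L_B(t)` is isospectral: its characteristic polynomial is
independent of `t`. -/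
def Isospectral {n : ℕ} (B : Matrix (Fin n) (Fin n) ℂ) : Prop :=
  ∀ s t : ℝ, (LB B s).charpoly = (LB B t).charpoly

/-- The word `w(B, Bᴴ)`: the ordered product over `j = 0, …, k-1` of `Bᴴ` if `w j = true`
and `B` otherwise. -/
noncomputable def wordProd {n : ℕ} (B : Matrix (Fin n) (Fin n) ℂ) {k : ℕ}
    (w : Fin k → Bool) : Matrix (Fin n) (Fin n) ℂ :=
  (List.ofFn fun j => if w j then Bᴴ else B).prod

/-!
`L_B(t) = ½ (e^{-it} B + e^{it} Bᴴ)` is Hermitian, so by Newton's identities applied to its real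
eigenvalues its characteristic polynomial is determined by the traces of `L_B(t)^k`, `k ≤ n`.
Expanding the power, `tr L_B(t)^k = 2^{-k} ∑_l e^{it(2l-k)} S_{k,l}`, where `S_{k,l}` is the sum
of the traces of the words with `l` letters `Bᴴ`. Reversing a word and swapping its letters gives
the adjoint word, so `S_{k,k-l} = conj S_{k,l}`; the hypothesis therefore kills every term with
`2l ≠ k`, and the surviving term does not depend on `t`.
-/

open Polynomial Finset

section Newton

variable {σ R : Type*} [Fintype σ] [CommRing R] [IsDomain R] [CharZero R]

theorem esymm_map_eq_of_sum_pow_eq {d e : σ → R}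
    (h : ∀ k, 1 ≤ k → k ≤ Fintype.card σ → ∑ i, d i ^ k = ∑ i, e i ^ k) (k : ℕ) :
    (univ.val.map d).esymm k = (univ.val.map e).esymm k := by
  induction k using Nat.strong_induction_on with
  | _ k ih =>
  rcases Nat.eq_zero_or_pos k with rfl | hk
  · simp [Multiset.esymm]
  rcases lt_or_ge (Fintype.card σ) k with hσk | hkσ
  · have hcard (f : σ → R) : (univ.val.map f).card < k := by simpa using hσk
    rw [Multiset.esymm, Multiset.esymm, Multiset.powersetCard_eq_empty _ (hcard d),
      Multiset.powersetCard_eq_empty _ (hcard e)]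
  have newton (f : σ → R) : ∑ i, f i ^ k = (-1) ^ (k + 1) * k * (univ.val.map f).esymm k -
      ∑ a ∈ antidiagonal k with a.1 ∈ Set.Ioo 0 k,
        (-1) ^ a.1 * (univ.val.map f).esymm a.1 * ∑ i, f i ^ a.2 := by
    simpa only [MvPolynomial.psum, map_sub, map_mul, map_pow, map_neg, map_one, map_natCast,
      map_sum, MvPolynomial.aeval_X, MvPolynomial.aeval_esymm_eq_multiset_esymm] using
      congrArg (MvPolynomial.aeval f) (MvPolynomial.psum_eq_mul_esymm_sub_sum σ R k hk)
  have lower : ∑ a ∈ antidiagonal k with a.1 ∈ Set.Ioo 0 k,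
        (-1) ^ a.1 * (univ.val.map d).esymm a.1 * ∑ i, d i ^ a.2 =
      ∑ a ∈ antidiagonal k with a.1 ∈ Set.Ioo 0 k,
        (-1) ^ a.1 * (univ.val.map e).esymm a.1 * ∑ i, e i ^ a.2 := by
    refine sum_congr rfl fun a ha => ?_
    simp only [mem_filter, HasAntidiagonal.mem_antidiagonal, Set.mem_Ioo] at ha
    rw [ih a.1 ha.2.2, h a.2 (by omega) (by omega)]
  have hunit : ((-1) ^ (k + 1) * k : R) ≠ 0 := by
    apply mul_ne_zero (pow_ne_zero _ (neg_ne_zero.mpr one_ne_zero))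
    exact_mod_cast hk.ne'
  have := (newton d).symm.trans ((h k hk hkσ).trans (newton e))
  rw [lower, sub_left_inj] at this
  exact mul_left_cancel₀ hunit this

theorem prod_X_sub_C_eq_of_sum_pow_eq {d e : σ → R}
    (h : ∀ k, 1 ≤ k → k ≤ Fintype.card σ → ∑ i, d i ^ k = ∑ i, e i ^ k) :
    ∏ i, (X - C (d i)) = ∏ i, (X - C (e i)) := by
  have hprod (f : σ → R) : ∏ i, (X - C (f i)) = ((univ.val.map f).map (X - C ·)).prod := by
    rw [Multiset.map_map]; rfl
  simp only [hprod, Multiset.prod_X_sub_X_eq_sum_esymm, Multiset.card_map,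
    esymm_map_eq_of_sum_pow_eq h]

end Newton

namespace Matrix.IsHermitian

variable {𝕜 ι : Type*} [RCLike 𝕜] [Fintype ι] [DecidableEq ι] {A B : Matrix ι ι 𝕜}

theorem trace_pow_eq_sum_eigenvalues_pow (hA : A.IsHermitian) (k : ℕ) :
    (A ^ k).trace = ∑ i, (hA.eigenvalues i : 𝕜) ^ k := by
  have hU : star (hA.eigenvectorUnitary : Matrix ι ι 𝕜) * hA.eigenvectorUnitary = 1 :=
    hA.eigenvectorUnitary.2.1
  conv_lhs => rw [hA.spectral_theorem, ← map_pow, Unitary.conjStarAlgAut_apply]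
  rw [trace_mul_cycle, hU, one_mul, diagonal_pow, trace_diagonal]
  rfl

theorem charpoly_eq_of_trace_pow_eq (hA : A.IsHermitian) (hB : B.IsHermitian)
    (h : ∀ k, 1 ≤ k → k ≤ Fintype.card ι → (A ^ k).trace = (B ^ k).trace) :
    A.charpoly = B.charpoly := by
  rw [hA.charpoly_eq, hB.charpoly_eq]
  refine prod_X_sub_C_eq_of_sum_pow_eq fun k hk hkι => ?_
  rw [← hA.trace_pow_eq_sum_eigenvalues_pow, ← hB.trace_pow_eq_sum_eigenvalues_pow]
  exact h k hk hkι

end Matrix.IsHermitian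

theorem add_pow_eq_sum_prod_ofFn {A : Type*} [Semiring A] (x y : A) (k : ℕ) :
    (x + y) ^ k = ∑ w : Fin k → Bool, (List.ofFn fun j => if w j then y else x).prod := by
  induction k with
  | zero => simp
  | succ k ih =>
    rw [pow_succ', ih, mul_sum, ← (Fin.consEquiv fun _ => Bool).sum_comp, Fintype.sum_prod_type]
    simp only [Fin.consEquiv_apply, List.ofFn_succ, Fin.cons_zero, Fin.cons_succ, List.prod_cons,
      Fintype.sum_bool, ← sum_add_distrib, add_mul]
    exact sum_congr rfl fun _ _ => add_comm _ _

theorem List.prod_ofFn_smul {R A : Type*} [CommSemiring R] [Semiring A] [Algebra R A] {k : ℕ}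
    (r : Fin k → R) (x : Fin k → A) :
    (List.ofFn fun j => r j • x j).prod = (∏ j, r j) • (List.ofFn x).prod := by
  induction k with
  | zero => simp
  | succ k ih =>
    rw [List.ofFn_succ, List.prod_cons, ih, List.ofFn_succ, List.prod_cons, Fin.prod_univ_succ,
      smul_mul_smul_comm]

section BinaryWords

variable {k : ℕ}

theorem card_filter_eq_false (w : Fin k → Bool) :
    #{j | w j = false} = k - #{j | w j = true} := by
  have := card_filter_add_card_filter_not (s := univ) fun j => w j = true
  simp only [Bool.not_eq_true, card_univ, Fintype.card_fin] at this
  omega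

theorem card_filter_true_le (w : Fin k → Bool) : #{j | w j = true} ≤ k :=
  (card_filter_le _ _).trans_eq (card_fin k)

theorem smul_add_smul_pow {R A : Type*} [CommSemiring R] [Semiring A] [Algebra R A]
    (a c : R) (x y : A) :
    (a • x + c • y) ^ k = ∑ w : Fin k → Bool,
      (a ^ (k - #{j | w j = true}) * c ^ #{j | w j = true}) •
        (List.ofFn fun j => if w j then y else x).prod := by
  rw [add_pow_eq_sum_prod_ofFn]
  refine sum_congr rfl fun w _ => ?_
  have hsplit : (fun j => if w j then c • y else a • x) =
      fun j => (if w j then c else a) • (if w j then y else x) := by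
    funext j; cases w j <;> rfl
  rw [hsplit, List.prod_ofFn_smul, prod_ite, prod_const, prod_const, mul_comm]
  simp only [Bool.not_eq_true, card_filter_eq_false]

theorem List.reverse_ofFn {α : Type*} (f : Fin k → α) :
    (List.ofFn f).reverse = List.ofFn (f ∘ Fin.rev) := by
  refine List.ext_getElem (by simp) fun i _ _ => ?_
  simp only [List.getElem_reverse, List.getElem_ofFn, List.length_ofFn, Function.comp_apply]
  congr 2; simp; omega

def dualWord (w : Fin k → Bool) : Fin k → Bool := fun j => !w (Fin.rev j)

theorem dualWord_involutive : Function.Involutive (dualWord (k := k)) := by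
  intro w; funext j; simp [dualWord]

theorem card_filter_dualWord (w : Fin k → Bool) :
    #{j | dualWord w j = true} = k - #{j | w j = true} := by
  rw [← card_filter_eq_false, card_filter, card_filter, ← Equiv.sum_comp Fin.revPerm]
  simp [dualWord]

end BinaryWords

section Words

variable {n : ℕ} (B : Matrix (Fin n) (Fin n) ℂ)

noncomputable def wordTraceSum (k l : ℕ) : ℂ :=
  ∑ w : Fin k → Bool with #{j | w j = true} = l, (wordProd B w).trace

theorem wordProd_conjTranspose {k : ℕ} (w : Fin k → Bool) :
    (wordProd B w)ᴴ = wordProd B (dualWord w) := by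
  rw [wordProd, wordProd, conjTranspose_list_prod, List.map_ofFn, List.reverse_ofFn]
  congr 2; funext j
  rcases hw : w (Fin.rev j) <;> simp [dualWord, hw]

theorem wordTraceSum_sub_eq_star {k l : ℕ} (hl : l ≤ k) :
    wordTraceSum B k (k - l) = star (wordTraceSum B k l) := by
  rw [wordTraceSum, wordTraceSum, star_sum]
  refine sum_equiv (dualWord_involutive.toPerm _) (fun w => ?_) fun w _ => ?_
  · simp only [mem_filter, mem_univ, true_and, Function.Involutive.coe_toPerm,
      card_filter_dualWord]
    have := card_filter_true_le w
    omega
  · simp [← trace_conjTranspose, wordProd_conjTranspose, dualWord_involutive w]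

theorem trace_smul_add_smul_conjTranspose_pow (a c : ℂ) (k : ℕ) :
    ((a • B + c • Bᴴ) ^ k).trace =
      ∑ l ∈ range (k + 1), a ^ (k - l) * c ^ l * wordTraceSum B k l := by
  have hmaps : ∀ w ∈ (univ : Finset (Fin k → Bool)), #{j | w j = true} ∈ range (k + 1) :=
    fun w _ => mem_range_succ_iff.mpr (card_filter_true_le w)
  rw [smul_add_smul_pow, trace_sum, ← sum_fiberwise_of_maps_to hmaps]
  refine sum_congr rfl fun l _ => ?_
  rw [wordTraceSum, mul_sum]
  refine sum_congr rfl fun w hw => ?_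
  rw [(mem_filter.mp hw).2, trace_smul, smul_eq_mul, wordProd]

end Words

section Pencil

open Complex

variable {n : ℕ} (B : Matrix (Fin n) (Fin n) ℂ)

theorem LB_eq_smul (t : ℝ) :
    LB B t = (1 / 2 : ℂ) • (cexp (-(t * I)) • B + cexp (t * I) • Bᴴ) := by
  have hexp (s : ℝ) : cexp (s * I) = Real.cos s + Real.sin s * I := by
    rw [exp_mul_I, ofReal_cos, ofReal_sin]
  have hinv : (1 / (2 * I) : ℂ) = -I / 2 := by
    rw [div_eq_div_iff (mul_ne_zero two_ne_zero I_ne_zero) two_ne_zero]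
    linear_combination 2 * I_mul_I
  rw [← neg_mul, ← ofReal_neg, hexp, hexp, Real.cos_neg, Real.sin_neg, LB, reM, imM, hinv]
  push_cast
  module

theorem LB_isHermitian (t : ℝ) : (LB B t).IsHermitian := by
  rw [IsHermitian, LB_eq_smul]
  simp only [conjTranspose_smul, conjTranspose_add, conjTranspose_conjTranspose, star_def,
    ← exp_conj, map_neg, map_mul, map_div₀, map_one, map_ofNat, conj_ofReal, conj_I, mul_neg,
    neg_neg, add_comm]

theorem trace_LB_pow (t : ℝ) (k : ℕ) :
    (LB B t ^ k).trace = (1 / 2 : ℂ) ^ k * ∑ l ∈ range (k + 1),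
      cexp (-(t * I)) ^ (k - l) * cexp (t * I) ^ l * wordTraceSum B k l := by
  rw [LB_eq_smul, _root_.smul_pow, trace_smul, smul_eq_mul, trace_smul_add_smul_conjTranspose_pow]

theorem trace_LB_pow_eq_of_wordTraceSum_eq_zero {k : ℕ}
    (hS : ∀ l ≤ k, 2 * l ≠ k → wordTraceSum B k l = 0) (s t : ℝ) :
    (LB B s ^ k).trace = (LB B t ^ k).trace := by
  have hterm (t : ℝ) (l : ℕ) (hl : l ∈ range (k + 1)) :
      cexp (-(t * I)) ^ (k - l) * cexp (t * I) ^ l * wordTraceSum B k l =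
        if 2 * l = k then wordTraceSum B k l else 0 := by
    split_ifs with hlk
    · rw [show k - l = l by omega, ← mul_pow, ← exp_add, neg_add_cancel, exp_zero, one_pow,
        one_mul]
    · rw [hS l (mem_range_succ_iff.mp hl) hlk, mul_zero]
  rw [trace_LB_pow, trace_LB_pow, sum_congr rfl (hterm s), sum_congr rfl (hterm t)]

end Pencil

/-- the vanishing of the sums of traces of words with `l` appearances of `Bᴴ`
among `k` letters, whenever `2l < k ≤ n`, implies isospectrality of the pencil. -/
theorem word_trace_sums_zero_implies_isospectral (n : ℕ) (B : Matrix (Fin n) (Fin n) ℂ)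
    (h : ∀ k l : ℕ, 1 ≤ k → k ≤ n → 2 * l < k →
      ∑ w ∈ Finset.univ.filter
          (fun w : Fin k → Bool => (Finset.univ.filter fun j => w j = true).card = l),
        (wordProd B w).trace = 0) :
    Isospectral B := by
  intro s t
  refine (LB_isHermitian B s).charpoly_eq_of_trace_pow_eq (LB_isHermitian B t) fun k hk hkn => ?_
  rw [Fintype.card_fin] at hkn
  refine trace_LB_pow_eq_of_wordTraceSum_eq_zero B (fun l hlk hl => ?_) s t
  rcases hl.lt_or_gt with hlt | hgt
  · exact h k l hk hkn hlt
  · rw [show l = k - (k - l) by omega, wordTraceSum_sub_eq_star B (Nat.sub_le k l),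
      wordTraceSum, h k (k - l) hk hkn (by omega), star_zero]
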